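/- arXiv:2005.06152 — 6 statements merged into one kernel-verified Lean document; each statement's English description precedes it below -/
import Mathlib

section
/- Let G be a simple graph, u a vertex of G, and t a vertex of degree 2 adjacent to u whose other neighbor is x, where x ≠ u and ux ∉ E(G). Let G′ be the graph obtained from G by deleting t and adding the edge ux (so E(G′) = (E(G) ∖ {ut, tx}) ∪ {ux}). If G′ admits an acyclic edge k-coloring and k ≥ d_G(u) + 1, then G admits an acyclic edge k-coloring. (In particular, taking k = Δ(G)+2 always satisfies k ≥ d_G(u)+1.) -/
variable {V : Type*}

/-- A proper edge `k`-coloring: every edge receives a color in `{1, …, k}`, and any two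
distinct edges sharing an endpoint receive different colors. -/
def ProperEdgeColoring (G : SimpleGraph V) (k : ℕ) (c : Sym2 V → ℕ) : Prop :=
  (∀ e ∈ G.edgeSet, c e ∈ Finset.Icc 1 k) ∧
    ∀ e₁ ∈ G.edgeSet, ∀ e₂ ∈ G.edgeSet, e₁ ≠ e₂ → (∃ x, x ∈ e₁ ∧ x ∈ e₂) → c e₁ ≠ c e₂

/-- No cycle of `G` has all of its edges colored with only two colors. -/
def NoBichromaticCycle (G : SimpleGraph V) (c : Sym2 V → ℕ) : Prop :=
  ∀ (v : V) (w : G.Walk v v), w.IsCycle → ¬ ∃ a b : ℕ, ∀ e ∈ w.edges, c e = a ∨ c e = b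

/-- An acyclic edge `k`-coloring is a proper edge `k`-coloring with no bichromatic cycle. -/
def AcyclicEdgeColoring (G : SimpleGraph V) (k : ℕ) (c : Sym2 V → ℕ) : Prop :=
  ProperEdgeColoring G k c ∧ NoBichromaticCycle G c

/-!
Give the edge `ut` a color `α` missing at `u` in `G'` (it exists because `u` has `d_G(u) < k`
incident edges in `G'`), give `tx` the color of `ux`, and keep all other colors. A cycle of `G`
avoiding `t` is a cycle of `G'` with the same colors. A cycle through `t` passes through `ut`,
`tx` and a third edge `ur` with `r ≠ t`, whose colors `α`, `c(ux)`, `c(ur)` are pairwise distinct.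
-/

lemma exists_mem_Icc_forall_ne_of_card_lt {s : Finset V} {k : ℕ} (f : V → ℕ) (hs : s.card < k) :
    ∃ α ∈ Finset.Icc 1 k, ∀ y ∈ s, f y ≠ α := by
  obtain ⟨α, hαk, hαs⟩ := Finset.exists_mem_notMem_of_card_lt_card
    (s := s.image f) (t := Finset.Icc 1 k) (Finset.card_image_le.trans_lt (by simpa using hs))
  exact ⟨α, hαk, fun y hy hfy => hαs (hfy ▸ Finset.mem_image_of_mem f hy)⟩

lemma NoBichromaticCycle.not_bichromatic_of_edges_subset {G H : SimpleGraph V}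
    {c c' : Sym2 V → ℕ} (hc : NoBichromaticCycle H c) {v : V} {w : G.Walk v v}
    (hw : w.IsCycle) (hH : ∀ e ∈ w.edges, e ∈ H.edgeSet) (hcc : ∀ e ∈ w.edges, c' e = c e) :
    ¬ ∃ a b : ℕ, ∀ e ∈ w.edges, c' e = a ∨ c' e = b := by
  rintro ⟨a, b, hab⟩
  refine hc v (w.transfer H hH) (hw.transfer hH) ⟨a, b, fun e he => ?_⟩
  rw [w.edges_transfer hH] at he
  exact hcc e he ▸ hab e he

namespace SimpleGraph

lemma Walk.IsCycle.exists_mem_edges_ne {G : SimpleGraph V} {v p : V} {w : G.Walk v v}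
    (hw : w.IsCycle) (hp : p ∈ w.support) (q : V) : ∃ r ≠ q, s(p, r) ∈ w.edges := by
  obtain ⟨r, hr, hrq⟩ := Set.exists_ne_of_one_lt_ncard
    (by rw [hw.ncard_neighborSet_toSubgraph_eq_two hp]; norm_num) q
  exact ⟨r, hrq, w.mem_edges_toSubgraph.mp hr⟩

lemma eq_or_eq_of_adj_of_degree_eq_two {G : SimpleGraph V} {t u x y : V}
    [Fintype (G.neighborSet t)] (hdeg : G.degree t = 2) (hu : G.Adj t u) (hx : G.Adj t x)
    (hux : u ≠ x) (hy : G.Adj t y) : y = u ∨ y = x := by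
  classical
  have hN : ({u, x} : Finset V) = G.neighborFinset t :=
    Finset.eq_of_subset_of_card_le (by simp [Finset.insert_subset_iff, hu, hx])
      (by rw [card_neighborFinset_eq_degree, hdeg, Finset.card_pair hux])
  have hy' := (G.mem_neighborFinset t y).mpr hy
  rw [← hN] at hy'
  simpa using hy'

lemma eq_or_eq_of_mem_edgeSet_of_mem {G : SimpleGraph V} {t u x : V}
    (ht : ∀ y, G.Adj t y → y = u ∨ y = x) {e : Sym2 V} (he : e ∈ G.edgeSet) (hte : t ∈ e) :
    e = s(u, t) ∨ e = s(t, x) := by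
  obtain ⟨y, rfl⟩ := Sym2.mem_iff_exists.mp hte
  rcases ht y he with rfl | rfl
  · exact Or.inl Sym2.eq_swap
  · exact Or.inr rfl

/-- The graph `G'` of the statement. -/
def suppress (G : SimpleGraph V) (u t x : V) : SimpleGraph V :=
  fromEdgeSet ((G.edgeSet \ {s(u, t), s(t, x)}) ∪ {s(u, x)})

section Suppress

variable {G : SimpleGraph V} {u t x : V}

lemma mem_edgeSet_suppress_of_ne {e : Sym2 V} (he : e ∈ G.edgeSet) (hut : e ≠ s(u, t))
    (htx : e ≠ s(t, x)) : e ∈ (G.suppress u t x).edgeSet := by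
  simp [suppress, he, hut, htx, G.not_isDiag_of_mem_edgeSet he]

lemma suppress_adj_of_ne (hux : u ≠ x) : (G.suppress u t x).Adj u x := by
  simp [suppress, hux]

lemma exists_mem_Icc_forall_adj_ne [Fintype (G.neighborSet u)] {k : ℕ} (hut : G.Adj u t)
    (hk : G.degree u + 1 ≤ k) (c : Sym2 V → ℕ) :
    ∃ α ∈ Finset.Icc 1 k, α ≠ c s(u, x) ∧ ∀ y, G.Adj u y → y ≠ t → c s(u, y) ≠ α := by
  classical
  have hcard : (insert x ((G.neighborFinset u).erase t)).card < k := by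
    have := Finset.card_insert_le x ((G.neighborFinset u).erase t)
    rw [Finset.card_erase_of_mem ((G.mem_neighborFinset u t).mpr hut),
      card_neighborFinset_eq_degree] at this
    have := G.degree_pos_iff_exists_adj u |>.mpr ⟨t, hut⟩
    omega
  obtain ⟨α, hαk, hα⟩ := exists_mem_Icc_forall_ne_of_card_lt (fun y => c s(u, y)) hcard
  exact ⟨α, hαk, (hα x (Finset.mem_insert_self _ _)).symm,
    fun y hy hyt => hα y (by simp [hy, hyt])⟩

end Suppress

def subdivisionColoring [DecidableEq V] (c : Sym2 V → ℕ) (u t x : V) (α : ℕ) :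
    Sym2 V → ℕ :=
  fun e => if e = s(u, t) then α else if e = s(t, x) then c s(u, x) else c e

section SubdivisionColoring

variable [DecidableEq V] {G : SimpleGraph V} {u t x : V} {k α : ℕ} {c : Sym2 V → ℕ}

@[simp]
lemma subdivisionColoring_left : subdivisionColoring c u t x α s(u, t) = α := by
  simp [subdivisionColoring]

lemma subdivisionColoring_right (hxu : x ≠ u) :
    subdivisionColoring c u t x α s(t, x) = c s(u, x) := by
  have htx : s(t, x) ≠ s(u, t) := by
    simp only [ne_eq, Sym2.eq_iff, hxu, and_false, or_false]
    rintro ⟨rfl, rfl⟩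
    exact hxu rfl
  simp [subdivisionColoring, htx]

lemma subdivisionColoring_of_ne {e : Sym2 V} (hut : e ≠ s(u, t)) (htx : e ≠ s(t, x)) :
    subdivisionColoring c u t x α e = c e := by
  simp [subdivisionColoring, hut, htx]

lemma subdivisionColoring_ne_of_eq_or_eq (hxu : x ≠ u) (ht : ∀ y, G.Adj t y → y = u ∨ y = x)
    (hux : ¬ G.Adj u x) (hc : ProperEdgeColoring (G.suppress u t x) k c) (hαx : α ≠ c s(u, x))
    (hαu : ∀ y, G.Adj u y → y ≠ t → c s(u, y) ≠ α) {e₁ e₂ : Sym2 V} (he₁ : e₁ ∈ G.edgeSet)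
    (hne : e₁ ≠ e₂) (hshare : ∃ y, y ∈ e₁ ∧ y ∈ e₂) (he₂ : e₂ = s(u, t) ∨ e₂ = s(t, x)) :
    subdivisionColoring c u t x α e₁ ≠ subdivisionColoring c u t x α e₂ := by
  obtain ⟨y, hy₁, hy₂⟩ := hshare
  by_cases hte : t ∈ e₁
  · rcases eq_or_eq_of_mem_edgeSet_of_mem ht he₁ hte with rfl | rfl <;>
      rcases he₂ with rfl | rfl <;>
      simp_all [subdivisionColoring_right hxu, Ne.symm hαx]
  have hut : e₁ ≠ s(u, t) := by rintro rfl; simp at hte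
  have htx : e₁ ≠ s(t, x) := by rintro rfl; simp at hte
  rw [subdivisionColoring_of_ne hut htx]
  rcases he₂ with rfl | rfl
  · obtain rfl : y = u := by
      rcases Sym2.mem_iff.mp hy₂ with rfl | rfl
      · rfl
      · exact absurd hy₁ hte
    obtain ⟨z, rfl⟩ := Sym2.mem_iff_exists.mp hy₁
    rw [subdivisionColoring_left]
    exact hαu z he₁ (by rintro rfl; simp at hte)
  · obtain rfl : y = x := by
      rcases Sym2.mem_iff.mp hy₂ with rfl | rfl
      · exact absurd hy₁ hte
      · rfl
    rw [subdivisionColoring_right hxu]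
    exact hc.2 e₁ (mem_edgeSet_suppress_of_ne he₁ hut htx) s(u, y) (suppress_adj_of_ne hxu.symm)
      (by rintro rfl; exact hux he₁) ⟨y, hy₁, by simp⟩

lemma properEdgeColoring_subdivisionColoring (hxu : x ≠ u)
    (ht : ∀ y, G.Adj t y → y = u ∨ y = x) (hux : ¬ G.Adj u x)
    (hc : ProperEdgeColoring (G.suppress u t x) k c) (hαk : α ∈ Finset.Icc 1 k)
    (hαx : α ≠ c s(u, x)) (hαu : ∀ y, G.Adj u y → y ≠ t → c s(u, y) ≠ α) :
    ProperEdgeColoring G k (subdivisionColoring c u t x α) := by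
  refine ⟨fun e he => ?_, fun e₁ he₁ e₂ he₂ hne hshare => ?_⟩
  · by_cases hut : e = s(u, t)
    · rw [hut, subdivisionColoring_left]
      exact hαk
    by_cases htx : e = s(t, x)
    · rw [htx, subdivisionColoring_right hxu]
      exact hc.1 _ (suppress_adj_of_ne hxu.symm)
    rw [subdivisionColoring_of_ne hut htx]
    exact hc.1 e (mem_edgeSet_suppress_of_ne he hut htx)
  by_cases h₂ : e₂ = s(u, t) ∨ e₂ = s(t, x)
  · exact subdivisionColoring_ne_of_eq_or_eq hxu ht hux hc hαx hαu he₁ hne hshare h₂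
  by_cases h₁ : e₁ = s(u, t) ∨ e₁ = s(t, x)
  · obtain ⟨y, hy₁, hy₂⟩ := hshare
    exact (subdivisionColoring_ne_of_eq_or_eq hxu ht hux hc hαx hαu he₂ hne.symm
      ⟨y, hy₂, hy₁⟩ h₁).symm
  rw [not_or] at h₁ h₂
  rw [subdivisionColoring_of_ne h₁.1 h₁.2, subdivisionColoring_of_ne h₂.1 h₂.2]
  exact hc.2 e₁ (mem_edgeSet_suppress_of_ne he₁ h₁.1 h₁.2) e₂
    (mem_edgeSet_suppress_of_ne he₂ h₂.1 h₂.2) hne hshare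

lemma subdivisionColoring_not_bichromatic_of_mem_support (hxu : x ≠ u)
    (ht : ∀ y, G.Adj t y → y = u ∨ y = x) (hux : ¬ G.Adj u x)
    (hc : ProperEdgeColoring (G.suppress u t x) k c) (hαx : α ≠ c s(u, x))
    (hαu : ∀ y, G.Adj u y → y ≠ t → c s(u, y) ≠ α) {v : V} {w : G.Walk v v} (hw : w.IsCycle)
    (hT : t ∈ w.support) :
    ¬ ∃ a b : ℕ, ∀ e ∈ w.edges, subdivisionColoring c u t x α e = a ∨
      subdivisionColoring c u t x α e = b := by
  rintro ⟨a, b, hab⟩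
  obtain ⟨r₁, hr₁, htr₁⟩ := hw.exists_mem_edges_ne hT u
  obtain ⟨r₂, hr₂, htr₂⟩ := hw.exists_mem_edges_ne hT x
  have htx : s(t, x) ∈ w.edges := by
    obtain rfl := (ht r₁ (w.adj_of_mem_edges htr₁)).resolve_left hr₁
    exact htr₁
  have hut : s(u, t) ∈ w.edges := by
    obtain rfl := (ht r₂ (w.adj_of_mem_edges htr₂)).resolve_right hr₂
    rwa [Sym2.eq_swap]
  obtain ⟨r, hrt, hur⟩ := hw.exists_mem_edges_ne (w.fst_mem_support_of_mem_edges hut) t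
  have hr : G.Adj u r := w.adj_of_mem_edges hur
  have hne_ut : s(u, r) ≠ s(u, t) := fun h => hrt (Sym2.congr_right.mp h)
  have hne_tx : s(u, r) ≠ s(t, x) := by
    simp [(w.adj_of_mem_edges hut).ne, hxu.symm]
  have hne_ux : s(u, r) ≠ s(u, x) := fun h => hux (Sym2.congr_right.mp h ▸ hr)
  have hrα : c s(u, r) ≠ α := hαu r hr hrt
  have hrx : c s(u, r) ≠ c s(u, x) :=
    hc.2 _ (mem_edgeSet_suppress_of_ne hr hne_ut hne_tx) _ (suppress_adj_of_ne hxu.symm) hne_ux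
      ⟨u, by simp, by simp⟩
  have h₁ := hab _ hut
  have h₂ := hab _ htx
  have h₃ := hab _ hur
  rw [subdivisionColoring_left] at h₁
  rw [subdivisionColoring_right hxu] at h₂
  rw [subdivisionColoring_of_ne hne_ut hne_tx] at h₃
  omega

lemma noBichromaticCycle_subdivisionColoring (hxu : x ≠ u)
    (ht : ∀ y, G.Adj t y → y = u ∨ y = x) (hux : ¬ G.Adj u x)
    (hc : AcyclicEdgeColoring (G.suppress u t x) k c) (hαx : α ≠ c s(u, x))
    (hαu : ∀ y, G.Adj u y → y ≠ t → c s(u, y) ≠ α) :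
    NoBichromaticCycle G (subdivisionColoring c u t x α) := by
  intro v w hw
  by_cases hT : t ∈ w.support
  · exact subdivisionColoring_not_bichromatic_of_mem_support hxu ht hux hc.1 hαx hαu hw hT
  have hne : ∀ e ∈ w.edges, e ≠ s(u, t) ∧ e ≠ s(t, x) := fun e he =>
    ⟨by rintro rfl; exact hT (w.snd_mem_support_of_mem_edges he),
      by rintro rfl; exact hT (w.fst_mem_support_of_mem_edges he)⟩
  exact NoBichromaticCycle.not_bichromatic_of_edges_subset hc.2 hw
    (fun e he => mem_edgeSet_suppress_of_ne (w.edges_subset_edgeSet he) (hne e he).1 (hne e he).2)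
    (fun e he => subdivisionColoring_of_ne (hne e he).1 (hne e he).2)

end SubdivisionColoring

end SimpleGraph

open SimpleGraph

/-- Suppression of a degree-`2` vertex `t` adjacent to `u` (other neighbor `x`, with
`x ≠ u` and `ux ∉ E(G)`): if the graph `G'` with
`E(G') = (E(G) \ {ut, tx}) ∪ {ux}` admits an acyclic edge `k`-coloring and
`k ≥ d_G(u) + 1`, then `G` admits an acyclic edge `k`-coloring. -/
theorem stmt_2 [Fintype V] [DecidableEq V] (G : SimpleGraph V) [DecidableRel G.Adj]
    (u t x : V) (hut : G.Adj u t) (htx : G.Adj t x) (hxu : x ≠ u)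
    (hdeg : G.degree t = 2) (hux : ¬ G.Adj u x) (k : ℕ)
    (hk : G.degree u + 1 ≤ k)
    (h : ∃ c : Sym2 V → ℕ,
      AcyclicEdgeColoring
        (SimpleGraph.fromEdgeSet ((G.edgeSet \ {s(u, t), s(t, x)}) ∪ {s(u, x)})) k c) :
    ∃ c : Sym2 V → ℕ, AcyclicEdgeColoring G k c := by
  obtain ⟨c, hc⟩ := h
  have ht : ∀ y, G.Adj t y → y = u ∨ y = x := fun y =>
    eq_or_eq_of_adj_of_degree_eq_two hdeg hut.symm htx hxu.symm
  obtain ⟨α, hαk, hαx, hαu⟩ := exists_mem_Icc_forall_adj_ne (x := x) hut hk c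
  exact ⟨subdivisionColoring c u t x α,
    properEdgeColoring_subdivisionColoring hxu ht hux hc.1 hαk hαx hαu,
    noBichromaticCycle_subdivisionColoring hxu ht hux hc hαx hαu⟩
end

section
/- Let G be a simple 2-connected graph (so every vertex has degree at least 2) satisfying: (i) no vertex of degree 2 in G is adjacent to a vertex of degree at most 5; (ii) every vertex u of degree at least 6 that is adjacent to some 2-vertex satisfies n_2(u) + n_3(u) ≤ d(u) − 3; (iii) no vertex u of degree at least 6 adjacent to some 2-vertex satisfies both n_2(u) + n_3(u) = d(u) − 3 and n_3(u) ≤ 3. Then every vertex of H has degree at least 3 in H; more specifically, for every vertex u of H: if 3 ≤ d(u) ≤ 5 then d_H(u) = d(u), and if d(u) ≥ 6 then d_H(u) ≥ 4. -/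
/-! Since a 2-connected graph has minimum degree 2, every neighbour of a vertex `u` of `H`
either has degree 2 or lies in `H`, so `d(u) = n₂(u) + d_H(u)`. Condition (i) gives
`n₂(u) = 0` when `d(u) ≤ 5`. When `d(u) ≥ 6`, conditions (ii) and (iii) leave either
`n₂(u) + n₃(u) ≤ d(u) - 4` or `n₃(u) ≥ 4` with `n₂(u) + n₃(u) = d(u) - 3`; in both cases
`d_H(u) = d(u) - n₂(u) ≥ 4`. -/

variable {V : Type*} [Fintype V] [DecidableEq V]

/-- `G` is 2-connected: it is connected, has at least 3 vertices, and deleting any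
single vertex leaves it connected. -/
def TwoConnected (G : SimpleGraph V) : Prop :=
  G.Connected ∧ 3 ≤ Fintype.card V ∧
    ∀ v : V, (G.induce {w : V | w ≠ v}).Connected

/-- `nk G u m` is the number of neighbors of `u` in `G` having degree exactly `m`. -/
def nk (G : SimpleGraph V) [DecidableRel G.Adj] (u : V) (m : ℕ) : ℕ :=
  ((G.neighborFinset u).filter fun w => G.degree w = m).card

/-- `delTwo G` is the graph `H` obtained from `G` by deleting all 2-vertices:
it keeps exactly the edges of `G` joining two vertices of degree at least 3
(deleted vertices become isolated). -/
def delTwo (G : SimpleGraph V) [DecidableRel G.Adj] : SimpleGraph V where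
  Adj x y := G.Adj x y ∧ 3 ≤ G.degree x ∧ 3 ≤ G.degree y
  symm := ⟨fun x y h => ⟨h.1.symm, h.2.2, h.2.1⟩⟩
  loopless := ⟨fun x h => G.loopless.irrefl x h.1⟩

instance (G : SimpleGraph V) [DecidableRel G.Adj] : DecidableRel (delTwo G).Adj :=
  fun x y => inferInstanceAs (Decidable (G.Adj x y ∧ 3 ≤ G.degree x ∧ 3 ≤ G.degree y))

open SimpleGraph Finset

variable {G : SimpleGraph V} [DecidableRel G.Adj]

lemma TwoConnected.two_le_degree (h2c : TwoConnected G) (v : V) : 2 ≤ G.degree v := by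
  obtain ⟨hconn, hcard, hdel⟩ := h2c
  have : Nontrivial V := Fintype.one_lt_card_iff_nontrivial.1 (by omega)
  obtain ⟨w, hvw⟩ := hconn.preconnected.exists_adj_of_nontrivial v
  have : Nontrivial {a : V | a ≠ w} := by
    rw [← Fintype.one_lt_card_iff_nontrivial, Set.card_ne_eq]
    omega
  obtain ⟨x, hvx⟩ := (hdel w).preconnected.exists_adj_of_nontrivial ⟨v, hvw.ne⟩
  have hxw : (x : V) ≠ w := x.2
  calc 2 = #{w, (x : V)} := (card_pair hxw.symm).symm
    _ ≤ G.degree v := card_le_card (by simpa [insert_subset_iff, hvw] using hvx)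

omit [DecidableEq V] in
lemma nk_eq_zero_iff {u : V} {m : ℕ} : nk G u m = 0 ↔ ∀ t, G.Adj u t → G.degree t ≠ m := by
  simp [nk, filter_eq_empty_iff]

omit [DecidableEq V] in
lemma neighborFinset_delTwo {u : V} (hu : 3 ≤ G.degree u) :
    (delTwo G).neighborFinset u = {w ∈ G.neighborFinset u | 3 ≤ G.degree w} := by
  ext w
  rw [mem_neighborFinset, mem_filter, mem_neighborFinset]
  exact ⟨fun h => ⟨h.1, h.2.2⟩, fun h => ⟨h.1, hu, h.2⟩⟩

omit [DecidableEq V] in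
lemma degree_eq_nk_two_add_degree_delTwo {u : V} (hmin : ∀ w, G.Adj u w → 2 ≤ G.degree w)
    (hu : 3 ≤ G.degree u) : G.degree u = nk G u 2 + (delTwo G).degree u := by
  rw [← card_neighborFinset_eq_degree (delTwo G), neighborFinset_delTwo hu, nk,
    ← card_neighborFinset_eq_degree G,
    ← card_filter_add_card_filter_not (s := G.neighborFinset u) (p := (G.degree · = 2))]
  congr 2
  refine filter_congr fun w hw => ?_
  have := hmin w ((mem_neighborFinset G u w).1 hw)
  omega

/-- In a 2-connected graph satisfying (i)–(iii), every vertex of `H` has `H`-degree at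
least 3; more precisely, if `3 ≤ d(u) ≤ 5` then `d_H(u) = d(u)`, and if `d(u) ≥ 6` then
`d_H(u) ≥ 4`. -/
theorem stmt_4 (G : SimpleGraph V) [DecidableRel G.Adj]
    (h2c : TwoConnected G)
    (hi : ∀ v w : V, G.Adj v w → G.degree v = 2 → ¬ G.degree w ≤ 5)
    (hii : ∀ z : V, 6 ≤ G.degree z → (∃ t, G.Adj z t ∧ G.degree t = 2) →
      nk G z 2 + nk G z 3 ≤ G.degree z - 3)
    (hiii : ∀ z : V, 6 ≤ G.degree z → (∃ t, G.Adj z t ∧ G.degree t = 2) →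
      ¬ (nk G z 2 + nk G z 3 = G.degree z - 3 ∧ nk G z 3 ≤ 3)) :
    ∀ u : V, 3 ≤ G.degree u →
      3 ≤ (delTwo G).degree u ∧
      (G.degree u ≤ 5 → (delTwo G).degree u = G.degree u) ∧
      (6 ≤ G.degree u → 4 ≤ (delTwo G).degree u) := by
  intro u hu
  have hdeg := degree_eq_nk_two_add_degree_delTwo (fun w _ => h2c.two_le_degree w) hu
  have hsmall : G.degree u ≤ 5 → (delTwo G).degree u = G.degree u := fun h5 => by
    have : nk G u 2 = 0 := nk_eq_zero_iff.2 fun t hut ht => hi t u hut.symm ht h5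
    omega
  have hlarge : 6 ≤ G.degree u → 4 ≤ (delTwo G).degree u := fun h6 => by
    by_cases htwo : ∃ t, G.Adj u t ∧ G.degree t = 2
    · have := hii u h6 htwo
      have := hiii u h6 htwo
      omega
    · have : nk G u 2 = 0 := nk_eq_zero_iff.2 fun t hut ht => htwo ⟨t, hut, ht⟩
      omega
  refine ⟨?_, hsmall, hlarge⟩
  rcases le_or_gt (G.degree u) 5 with h5 | h6
  · exact hsmall h5 ▸ hu
  · exact (hlarge h6).trans' (by norm_num)
end

section
/- Let G be a simple 2-connected graph satisfying: (i) no vertex of degree 2 in G is adjacent to a vertex of degree at most 5; (ii) every vertex u of degree at least 6 that is adjacent to some 2-vertex satisfies n_2(u) + n_3(u) ≤ d(u) − 3; (iii) no vertex u of degree at least 6 adjacent to some 2-vertex satisfies both n_2(u) + n_3(u) = d(u) − 3 and n_3(u) ≤ 3. Then for every vertex u of H: no neighbor of u in H has degree 2 in G; d_H(u) = 3 if and only if d(u) = 3; and the number of neighbors of u in H whose degree in H is 3 equals n_3(u), the number of neighbors of u in G whose degree in G is 3. -/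
/-! A 2-connected graph has minimum degree at least 2, so deleting the 2-vertices lowers
`d(u)` by exactly `n₂(u)`. Hence `d_H(u) = 3 ≠ d(u)` forces a 2-neighbour, so `d(u) ≥ 6`
by (i), and then (ii) gives `n₂(u) = d(u) - 3`, `n₃(u) = 0`, which (iii) excludes.
Conversely `d(u) = 3` leaves no 2-neighbour by (i). Since `d_H` and `d` agree on whether
they equal 3, the 3-neighbours of `u` in `H` and in `G` coincide. -/

variable {V : Type*} [Fintype V] [DecidableEq V]

namespace SimpleGraph

omit [DecidableEq V]

variable {G : SimpleGraph V} [DecidableRel G.Adj] {u : V}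

theorem _root_.TwoConnected.two_le_degree_s5 (h : TwoConnected G) (v : V) : 2 ≤ G.degree v := by
  obtain ⟨hconn, hcard, hdel⟩ := h
  classical
  have : Nontrivial V := Fintype.one_lt_card_iff_nontrivial.mp (by omega)
  obtain ⟨x, hvx⟩ := hconn.preconnected.exists_adj_of_nontrivial v
  have : Nontrivial {w : V | w ≠ x} := by
    rw [← Fintype.one_lt_card_iff_nontrivial]
    simp only [ne_eq, Set.coe_ofPred, Fintype.card_subtype_compl, Fintype.card_unique]
    omega
  obtain ⟨y, hvy⟩ := (hdel x).preconnected.exists_adj_of_nontrivial ⟨v, hvx.ne⟩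
  rw [← card_neighborFinset_eq_degree]
  exact Finset.one_lt_card.mpr
    ⟨x, (mem_neighborFinset _ _ _).mpr hvx, y, (mem_neighborFinset _ _ _).mpr hvy,
      fun h => y.2 h.symm⟩

theorem delTwo_neighborFinset (hu : 3 ≤ G.degree u) :
    (delTwo G).neighborFinset u = {w ∈ G.neighborFinset u | 3 ≤ G.degree w} := by
  ext w
  simp only [mem_neighborFinset, Finset.mem_filter]
  exact ⟨fun h => ⟨h.1, h.2.2⟩, fun h => ⟨h.1, hu, h.2⟩⟩

theorem delTwo_degree_add_nk_two (hmin : ∀ v, 2 ≤ G.degree v) (hu : 3 ≤ G.degree u) :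
    (delTwo G).degree u + nk G u 2 = G.degree u := by
  have hcompl : {w ∈ G.neighborFinset u | ¬ 3 ≤ G.degree w} =
      {w ∈ G.neighborFinset u | G.degree w = 2} :=
    Finset.filter_congr fun w _ => by have := hmin w; omega
  rw [← card_neighborFinset_eq_degree, delTwo_neighborFinset hu, nk, ← hcompl,
    Finset.card_filter_add_card_filter_not, card_neighborFinset_eq_degree]

theorem exists_adj_degree_eq_of_nk_pos {m : ℕ} (h : 0 < nk G u m) :
    ∃ t, G.Adj u t ∧ G.degree t = m := by
  obtain ⟨t, ht⟩ := Finset.card_pos.mp h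
  simp only [Finset.mem_filter, mem_neighborFinset] at ht
  exact ⟨t, ht⟩

theorem delTwo_degree_eq_three_iff (hmin : ∀ v, 2 ≤ G.degree v)
    (hi : ∀ v w : V, G.Adj v w → G.degree v = 2 → ¬ G.degree w ≤ 5)
    (hii : ∀ z : V, 6 ≤ G.degree z → (∃ t, G.Adj z t ∧ G.degree t = 2) →
      nk G z 2 + nk G z 3 ≤ G.degree z - 3)
    (hiii : ∀ z : V, 6 ≤ G.degree z → (∃ t, G.Adj z t ∧ G.degree t = 2) →
      ¬ (nk G z 2 + nk G z 3 = G.degree z - 3 ∧ nk G z 3 ≤ 3))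
    (hu : 3 ≤ G.degree u) :
    (delTwo G).degree u = 3 ↔ G.degree u = 3 := by
  have hsum := delTwo_degree_add_nk_two hmin hu
  constructor
  · intro hH
    by_contra hne
    obtain ⟨t, ht⟩ := exists_adj_degree_eq_of_nk_pos (show 0 < nk G u 2 by omega)
    have h6 : 6 ≤ G.degree u := by have := hi t u ht.1.symm ht.2; omega
    have hbound := hii u h6 ⟨t, ht⟩
    exact hiii u h6 ⟨t, ht⟩ ⟨by omega, by omega⟩
  · intro h3
    have hnk : nk G u 2 = 0 := by
      by_contra hpos
      obtain ⟨t, ht⟩ := exists_adj_degree_eq_of_nk_pos (Nat.pos_of_ne_zero hpos)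
      exact hi t u ht.1.symm ht.2 (by omega)
    omega

theorem card_delTwo_neighbors_degree_three
    (hiff : ∀ w, 3 ≤ G.degree w → ((delTwo G).degree w = 3 ↔ G.degree w = 3))
    (hu : 3 ≤ G.degree u) :
    ({w ∈ (delTwo G).neighborFinset u | (delTwo G).degree w = 3}).card = nk G u 3 := by
  rw [delTwo_neighborFinset hu, Finset.filter_filter, nk]
  congr 1
  exact Finset.filter_congr fun w _ => by
    constructor
    · exact fun ⟨hw, h3⟩ => (hiff w hw).mp h3
    · exact fun h3 => ⟨h3.ge, (hiff w h3.ge).mpr h3⟩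

end SimpleGraph

open SimpleGraph in
/-- In a 2-connected graph satisfying (i)–(iii), for every vertex `u` of `H`:
no `H`-neighbor of `u` has `G`-degree 2; `d_H(u) = 3 ↔ d(u) = 3`; and the number of
`H`-neighbors of `u` of `H`-degree 3 equals `n₃(u)`, the number of `G`-neighbors of `u`
of `G`-degree 3. -/
theorem stmt_5 (G : SimpleGraph V) [DecidableRel G.Adj]
    (h2c : TwoConnected G)
    (hi : ∀ v w : V, G.Adj v w → G.degree v = 2 → ¬ G.degree w ≤ 5)
    (hii : ∀ z : V, 6 ≤ G.degree z → (∃ t, G.Adj z t ∧ G.degree t = 2) →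
      nk G z 2 + nk G z 3 ≤ G.degree z - 3)
    (hiii : ∀ z : V, 6 ≤ G.degree z → (∃ t, G.Adj z t ∧ G.degree t = 2) →
      ¬ (nk G z 2 + nk G z 3 = G.degree z - 3 ∧ nk G z 3 ≤ 3)) :
    ∀ u : V, 3 ≤ G.degree u →
      (∀ w : V, (delTwo G).Adj u w → G.degree w ≠ 2) ∧
      ((delTwo G).degree u = 3 ↔ G.degree u = 3) ∧
      (((delTwo G).neighborFinset u).filter
          fun w => (delTwo G).degree w = 3).card = nk G u 3 := by
  intro u hu
  have hiff : ∀ w, 3 ≤ G.degree w → ((delTwo G).degree w = 3 ↔ G.degree w = 3) :=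
    fun w => delTwo_degree_eq_three_iff h2c.two_le_degree_s5 hi hii hiii
  exact ⟨fun w hw => (Nat.lt_of_succ_le hw.2.2).ne', hiff u hu,
    card_delTwo_neighbors_degree_three hiff hu⟩
end

section
/- Let G be a simple 2-connected graph satisfying: (i) no vertex of degree 2 in G is adjacent to a vertex of degree at most 5; (ii) every vertex u of degree at least 6 that is adjacent to some 2-vertex satisfies n_2(u) + n_3(u) ≤ d(u) − 3; (iii) no vertex u of degree at least 6 adjacent to some 2-vertex satisfies both n_2(u) + n_3(u) = d(u) − 3 and n_3(u) ≤ 3; (iv) no two adjacent vertices of G both have degree 3; (v) G contains no triangle having both a vertex of degree 3 and a vertex of degree 4. If uvw is a triangle of H in which the minimum of the H-degrees of u, v, w equals 3, then exactly one of u, v, w has H-degree 3 and the other two have H-degree at least 5. -/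
variable {V : Type*} [Fintype V] [DecidableEq V]

/-!
Deleting the 2-vertices lowers the degree of a vertex `z` of degree at least 3 by exactly
`n₂(z)`, since 2-connectivity rules out 1-vertices. A vertex with a 2-neighbour has degree at
least 6 by (i), and then (ii) and (iii) give it `H`-degree at least `min (n₃(z) + 4) 7`.
Hence a vertex of `H`-degree 3 has no 2-neighbours and is a 3-vertex of `G`. Its two partners
in the triangle have `G`-degree at least 5 by (iv) and (v), and each has a 3-neighbour, so
their `H`-degree is at least 5 as well.
-/

section
variable {G : SimpleGraph V} [DecidableRel G.Adj]

/-- A vertex `y` whose only neighbour is `v` would be isolated in `G - v`, yet `G - v` is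
connected and contains a third vertex. -/
theorem TwoConnected.degree_ne_one (h : TwoConnected G) (y : V) : G.degree y ≠ 1 := by
  intro hy
  obtain ⟨-, hcard, hdel⟩ := h
  obtain ⟨v, hv⟩ := Finset.card_eq_one.mp hy
  have hyv : y ≠ v := G.ne_of_adj (by simpa using hv.ge (Finset.mem_singleton_self v))
  obtain ⟨z, -, hz⟩ := Finset.exists_mem_notMem_of_card_lt_card
    (s := {y, v}) (t := Finset.univ) <| by
      rw [Finset.card_univ]
      exact (Finset.card_le_two).trans_lt hcard
  simp only [Finset.mem_insert, Finset.mem_singleton, not_or] at hz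
  obtain ⟨⟨c, hcv⟩, hyc⟩ := ((hdel v).preconnected ⟨y, hyv⟩ ⟨z, hz.2⟩).nonempty_neighborSet_left
    (fun h => hz.1 (congrArg Subtype.val h).symm)
  have : c ∈ G.neighborFinset y := by simpa using SimpleGraph.induce_adj.mp hyc
  exact hcv (by simpa [hv] using this)

omit [DecidableEq V]

theorem nk_pos_of_adj {u v : V} (h : G.Adj v u) : 0 < nk G v (G.degree u) :=
  Finset.card_pos.mpr ⟨u, by simpa [nk] using h⟩

theorem delTwo_degree_add_nk_two (hone : ∀ y, G.degree y ≠ 1) {v : V} (hv : 3 ≤ G.degree v) :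
    (delTwo G).degree v + nk G v 2 = G.degree v := by
  have hnbr : (delTwo G).neighborFinset v = (G.neighborFinset v).filter (G.degree · ≠ 2) := by
    ext y
    rw [Finset.mem_filter, SimpleGraph.mem_neighborFinset, SimpleGraph.mem_neighborFinset]
    refine ⟨fun ⟨ha, _, h3⟩ => ⟨ha, by omega⟩, fun ⟨ha, h2⟩ => ⟨ha, hv, ?_⟩⟩
    have := ha.degree_pos_right
    have := hone y
    omega
  rw [← SimpleGraph.card_neighborFinset_eq_degree, hnbr, nk, add_comm,
    Finset.card_filter_add_card_filter_not, SimpleGraph.card_neighborFinset_eq_degree]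

/-- Where (ii) is tight, (iii) forces at least four 3-neighbours, hence `H`-degree at least 7;
otherwise the slack in (ii) gives `H`-degree at least `n₃ + 4`. -/
theorem min_le_delTwo_degree (hone : ∀ y, G.degree y ≠ 1) {z : V} (hz : 3 ≤ G.degree z)
    (hii : nk G z 2 + nk G z 3 ≤ G.degree z - 3)
    (hiii : ¬ (nk G z 2 + nk G z 3 = G.degree z - 3 ∧ nk G z 3 ≤ 3)) :
    min (nk G z 3 + 4) 7 ≤ (delTwo G).degree z := by
  have := delTwo_degree_add_nk_two hone hz
  omega

theorem delTwo_degree_eq_or_min_le (hone : ∀ y, G.degree y ≠ 1) {z : V} (hz : 3 ≤ G.degree z)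
    (hi : ∀ t, G.Adj t z → G.degree t = 2 → ¬ G.degree z ≤ 5)
    (hii : 6 ≤ G.degree z → (∃ t, G.Adj z t ∧ G.degree t = 2) →
      nk G z 2 + nk G z 3 ≤ G.degree z - 3)
    (hiii : 6 ≤ G.degree z → (∃ t, G.Adj z t ∧ G.degree t = 2) →
      ¬ (nk G z 2 + nk G z 3 = G.degree z - 3 ∧ nk G z 3 ≤ 3)) :
    (delTwo G).degree z = G.degree z ∨ min (nk G z 3 + 4) 7 ≤ (delTwo G).degree z := by
  by_cases h2 : nk G z 2 = 0
  · have := delTwo_degree_add_nk_two hone hz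
    omega
  · obtain ⟨t, ht⟩ := Finset.card_pos.mp (Nat.pos_of_ne_zero h2)
    rw [Finset.mem_filter, SimpleGraph.mem_neighborFinset] at ht
    have h6 : 6 ≤ G.degree z := by have := hi t ht.1.symm ht.2; omega
    exact .inr (min_le_delTwo_degree hone hz (hii h6 ⟨t, ht⟩) (hiii h6 ⟨t, ht⟩))

end

/-- In a 2-connected graph satisfying (i)–(v): every triangle of `H` whose minimum
`H`-degree is 3 has exactly one vertex of `H`-degree 3, the other two having `H`-degree
at least 5. -/
theorem stmt_7 (G : SimpleGraph V) [DecidableRel G.Adj]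
    (h2c : TwoConnected G)
    (hi : ∀ v w : V, G.Adj v w → G.degree v = 2 → ¬ G.degree w ≤ 5)
    (hii : ∀ z : V, 6 ≤ G.degree z → (∃ t, G.Adj z t ∧ G.degree t = 2) →
      nk G z 2 + nk G z 3 ≤ G.degree z - 3)
    (hiii : ∀ z : V, 6 ≤ G.degree z → (∃ t, G.Adj z t ∧ G.degree t = 2) →
      ¬ (nk G z 2 + nk G z 3 = G.degree z - 3 ∧ nk G z 3 ≤ 3))
    (hiv : ∀ v w : V, G.Adj v w → G.degree v = 3 → G.degree w ≠ 3)
    (hv : ∀ a b c : V, G.Adj a b → G.Adj b c → G.Adj c a →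
      ¬ ((G.degree a = 3 ∨ G.degree b = 3 ∨ G.degree c = 3) ∧
         (G.degree a = 4 ∨ G.degree b = 4 ∨ G.degree c = 4))) :
    ∀ u v w : V, (delTwo G).Adj u v → (delTwo G).Adj v w → (delTwo G).Adj w u →
      min (min ((delTwo G).degree u) ((delTwo G).degree v)) ((delTwo G).degree w) = 3 →
      ((delTwo G).degree u = 3 ∧ 5 ≤ (delTwo G).degree v ∧ 5 ≤ (delTwo G).degree w) ∨
      ((delTwo G).degree v = 3 ∧ 5 ≤ (delTwo G).degree u ∧ 5 ≤ (delTwo G).degree w) ∨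
      ((delTwo G).degree w = 3 ∧ 5 ≤ (delTwo G).degree u ∧ 5 ≤ (delTwo G).degree v) := by
  intro u v w huv hvw hwu hmin
  have hH (z : V) (hz : 3 ≤ G.degree z) :=
    delTwo_degree_eq_or_min_le h2c.degree_ne_one hz (fun t => hi t z) (hii z) (hiii z)
  have key {a b c : V} (hab : (delTwo G).Adj a b) (hbc : (delTwo G).Adj b c)
      (hca : (delTwo G).Adj c a) (ha : (delTwo G).degree a = 3) :
      5 ≤ (delTwo G).degree b ∧ 5 ≤ (delTwo G).degree c := by
    have ha3 : G.degree a = 3 := by have := hH a hab.2.1; omega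
    have hbc5 : 5 ≤ G.degree b ∧ 5 ≤ G.degree c := by
      have := hiv a b hab.1 ha3
      have := hiv a c hca.1.symm ha3
      have := hv a b c hab.1 hbc.1 hca.1
      have := hab.2.2
      have := hca.2.1
      omega
    have hb3 : 0 < nk G b 3 := ha3 ▸ nk_pos_of_adj hab.1.symm
    have hc3 : 0 < nk G c 3 := ha3 ▸ nk_pos_of_adj hca.1
    have := hH b hab.2.2
    have := hH c hca.2.1
    omega
  rcases (by omega : (delTwo G).degree u = 3 ∨ (delTwo G).degree v = 3 ∨
      (delTwo G).degree w = 3) with h | h | h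
  · exact .inl ⟨h, key huv hvw hwu h⟩
  · exact .inr <| .inl ⟨h, (key hvw hwu huv h).symm⟩
  · exact .inr <| .inr ⟨h, key hwu huv hvw h⟩
end

section
/- Let G be a simple 2-connected graph satisfying: (i) no vertex of degree 2 in G is adjacent to a vertex of degree at most 5; (ii) every vertex u of degree at least 6 that is adjacent to some 2-vertex satisfies n_2(u) + n_3(u) ≤ d(u) − 3; (iii) no vertex u of degree at least 6 adjacent to some 2-vertex satisfies both n_2(u) + n_3(u) = d(u) − 3 and n_3(u) ≤ 3; (iv) G contains no vertex z of degree at least 6 adjacent to some 2-vertex such that n_2(z) = d(z) − 4 (so z has exactly four neighbors of degree at least 3) and among these four neighbors there are two adjacent vertices a and b with n_2(b) ∈ {d(b) − 4, d(b) − 5}; (v) G contains no triangle whose three vertices all have degree 4 in G. Let uvw be a triangle of H with min{d_H(u), d_H(v), d_H(w)} = 4. Then: (1) if d_H(v) = 4 and d(v) > 4, then d_H(u) ≥ 6 and d_H(w) ≥ 6; (2) if d_H(v) = 4 and 4 ≤ d_H(u) ≤ 5, then d(v) = 4; (3) at least one of u, v, w has H-degree at least 5. -/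
variable {V : Type*} [Fintype V] [DecidableEq V]

/-!
Since `G` is 2-connected, every vertex has degree at least 2, so `d(x) = d_H(x) + n_2(x)` for
every vertex `x` of `H`. If `d_H(v) = 4 < d(v)` on a triangle `uvw` of `H`, then `v` has a
2-neighbour, hence `d(v) ≥ 6` by (i) and `n_2(v) = d(v) - 4`; if moreover `d_H(u) ∈ {4, 5}`, then
`n_2(u) ∈ {d(u) - 4, d(u) - 5}` and `z = v`, `a = w`, `b = u` is the configuration excluded by
(iv). This gives (1) and (2), and by (2) a triangle of `H` with all `H`-degrees 4 would be a
triangle of 4-vertices of `G`, excluded by (v).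
-/

open SimpleGraph

theorem TwoConnected.two_le_degree_s8 {G : SimpleGraph V} [DecidableRel G.Adj]
    (h : TwoConnected G) (t : V) : 2 ≤ G.degree t := by
  obtain ⟨hconn, hcard, hdel⟩ := h
  have : Nontrivial V := Fintype.one_lt_card_iff_nontrivial.mp (by omega)
  obtain ⟨s, hts⟩ : ∃ s, G.Adj t s := by
    simpa [IsIsolated] using hconn.preconnected.not_isIsolated t
  have : Nontrivial {w : V | w ≠ s} := by
    rw [← Fintype.one_lt_card_iff_nontrivial]
    simp only [Set.coe_ofPred, Fintype.card_subtype_compl, Fintype.card_unique]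
    omega
  obtain ⟨⟨y, hys⟩, hty⟩ : ∃ y : {w : V | w ≠ s}, G.Adj t y := by
    simpa [IsIsolated] using (hdel s).preconnected.not_isIsolated ⟨t, hts.ne⟩
  rw [← card_neighborFinset_eq_degree]
  exact Finset.one_lt_card.mpr ⟨s, by simpa using hts, y, by simpa using hty, Ne.symm hys⟩

omit [DecidableEq V] in
theorem degree_eq_degree_delTwo_add_nk_two {G : SimpleGraph V} [DecidableRel G.Adj]
    (hmin : ∀ t, 2 ≤ G.degree t) {v : V} (hv : 3 ≤ G.degree v) :
    G.degree v = (delTwo G).degree v + nk G v 2 := by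
  have hH : (delTwo G).neighborFinset v = (G.neighborFinset v).filter (G.degree · ≠ 2) := by
    ext w
    simp only [mem_neighborFinset, Finset.mem_filter]
    simp only [delTwo]
    have := hmin w
    constructor
    · rintro ⟨hvw, -, hw⟩
      exact ⟨hvw, by omega⟩
    · rintro ⟨hvw, hw⟩
      exact ⟨hvw, hv, by omega⟩
  rw [← card_neighborFinset_eq_degree, ← card_neighborFinset_eq_degree, hH, nk, add_comm,
    Finset.card_filter_add_card_filter_not]

omit [DecidableEq V] in
theorem degree_eq_four_of_delTwo_triangle {G : SimpleGraph V} [DecidableRel G.Adj]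
    (hmin : ∀ t, 2 ≤ G.degree t)
    (hi : ∀ v w : V, G.Adj v w → G.degree v = 2 → ¬ G.degree w ≤ 5)
    (hiv : ¬ ∃ z a b : V, 6 ≤ G.degree z ∧ (∃ t, G.Adj z t ∧ G.degree t = 2) ∧
      nk G z 2 = G.degree z - 4 ∧
      G.Adj z a ∧ G.Adj z b ∧ 3 ≤ G.degree a ∧ 3 ≤ G.degree b ∧ G.Adj a b ∧
      (nk G b 2 = G.degree b - 4 ∨ nk G b 2 = G.degree b - 5))
    ⦃u v w : V⦄ (hvu : (delTwo G).Adj v u) (hvw : (delTwo G).Adj v w)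
    (hwu : (delTwo G).Adj w u) (hv4 : (delTwo G).degree v = 4)
    (hu : (delTwo G).degree u = 4 ∨ (delTwo G).degree u = 5) :
    G.degree v = 4 := by
  obtain ⟨hGvu, hv3, hu3⟩ := hvu
  obtain ⟨hGvw, -, hw3⟩ := hvw
  have hdv := degree_eq_degree_delTwo_add_nk_two hmin hv3
  have hdu := degree_eq_degree_delTwo_add_nk_two hmin hu3
  by_contra hne
  obtain ⟨t, ht⟩ := Finset.card_pos.mp (by omega : 0 < nk G v 2)
  rw [Finset.mem_filter, mem_neighborFinset] at ht
  obtain ⟨hvt, ht⟩ := ht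
  have hv6 := hi t v hvt.symm ht
  exact hiv ⟨v, w, u, by omega, ⟨t, hvt, ht⟩, by omega, hGvw, hGvu, hw3, hu3, hwu.1, by omega⟩

theorem stmt_8_general (G : SimpleGraph V) [DecidableRel G.Adj]
    (h2c : TwoConnected G)
    (hi : ∀ v w : V, G.Adj v w → G.degree v = 2 → ¬ G.degree w ≤ 5)
    (hiv : ¬ ∃ z a b : V, 6 ≤ G.degree z ∧ (∃ t, G.Adj z t ∧ G.degree t = 2) ∧
      nk G z 2 = G.degree z - 4 ∧
      G.Adj z a ∧ G.Adj z b ∧ 3 ≤ G.degree a ∧ 3 ≤ G.degree b ∧ G.Adj a b ∧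
      (nk G b 2 = G.degree b - 4 ∨ nk G b 2 = G.degree b - 5))
    (hv : ∀ a b c : V, G.Adj a b → G.Adj b c → G.Adj c a →
      ¬ (G.degree a = 4 ∧ G.degree b = 4 ∧ G.degree c = 4)) :
    ∀ u v w : V, (delTwo G).Adj u v → (delTwo G).Adj v w → (delTwo G).Adj w u →
      min (min ((delTwo G).degree u) ((delTwo G).degree v)) ((delTwo G).degree w) = 4 →
      (((delTwo G).degree v = 4 ∧ 4 < G.degree v →
          6 ≤ (delTwo G).degree u ∧ 6 ≤ (delTwo G).degree w) ∧
       ((delTwo G).degree v = 4 ∧ 4 ≤ (delTwo G).degree u ∧ (delTwo G).degree u ≤ 5 →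
          G.degree v = 4) ∧
       (5 ≤ (delTwo G).degree u ∨ 5 ≤ (delTwo G).degree v ∨ 5 ≤ (delTwo G).degree w)) := by
  intro u v w huv hvw hwu hmin4
  have key := degree_eq_four_of_delTwo_triangle h2c.two_le_degree_s8 hi hiv
  refine ⟨fun ⟨hv4, _⟩ => ⟨?_, ?_⟩, fun ⟨hv4, hu4, hu5⟩ => key huv.symm hvw hwu hv4 (by omega), ?_⟩
  · by_contra hu
    have := key huv.symm hvw hwu hv4 (by omega)
    omega
  · by_contra hw
    have := key hvw huv.symm hwu.symm hv4 (by omega)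
    omega
  · by_contra! h
    exact hv u v w huv.1 hvw.1 hwu.1
      ⟨key huv hwu.symm hvw.symm (by omega) (by omega), key huv.symm hvw hwu (by omega) (by omega),
        key hwu hvw.symm huv.symm (by omega) (by omega)⟩

/-- In a 2-connected graph satisfying (i)–(v): for every triangle `uvw` of `H` with
minimum `H`-degree 4: (1) if `d_H(v) = 4` and `d(v) > 4` then `d_H(u) ≥ 6` and
`d_H(w) ≥ 6`; (2) if `d_H(v) = 4` and `4 ≤ d_H(u) ≤ 5` then `d(v) = 4`;
(3) some vertex of the triangle has `H`-degree at least 5. -/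
theorem stmt_8 (G : SimpleGraph V) [DecidableRel G.Adj]
    (h2c : TwoConnected G)
    (hi : ∀ v w : V, G.Adj v w → G.degree v = 2 → ¬ G.degree w ≤ 5)
    (hii : ∀ z : V, 6 ≤ G.degree z → (∃ t, G.Adj z t ∧ G.degree t = 2) →
      nk G z 2 + nk G z 3 ≤ G.degree z - 3)
    (hiii : ∀ z : V, 6 ≤ G.degree z → (∃ t, G.Adj z t ∧ G.degree t = 2) →
      ¬ (nk G z 2 + nk G z 3 = G.degree z - 3 ∧ nk G z 3 ≤ 3))
    (hiv : ¬ ∃ z a b : V, 6 ≤ G.degree z ∧ (∃ t, G.Adj z t ∧ G.degree t = 2) ∧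
      nk G z 2 = G.degree z - 4 ∧
      G.Adj z a ∧ G.Adj z b ∧ 3 ≤ G.degree a ∧ 3 ≤ G.degree b ∧ G.Adj a b ∧
      (nk G b 2 = G.degree b - 4 ∨ nk G b 2 = G.degree b - 5))
    (hv : ∀ a b c : V, G.Adj a b → G.Adj b c → G.Adj c a →
      ¬ (G.degree a = 4 ∧ G.degree b = 4 ∧ G.degree c = 4)) :
    ∀ u v w : V, (delTwo G).Adj u v → (delTwo G).Adj v w → (delTwo G).Adj w u →
      min (min ((delTwo G).degree u) ((delTwo G).degree v)) ((delTwo G).degree w) = 4 →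
      (((delTwo G).degree v = 4 ∧ 4 < G.degree v →
          6 ≤ (delTwo G).degree u ∧ 6 ≤ (delTwo G).degree w) ∧
       ((delTwo G).degree v = 4 ∧ 4 ≤ (delTwo G).degree u ∧ (delTwo G).degree u ≤ 5 →
          G.degree v = 4) ∧
       (5 ≤ (delTwo G).degree u ∨ 5 ≤ (delTwo G).degree v ∨ 5 ≤ (delTwo G).degree w)) :=
  stmt_8_general G h2c hi hiv hv
end

section
/- Let G be a simple graph, uv an edge of G, c an acyclic edge k-coloring of H := G − uv, and j a color in {1,…,k} with j ∉ C(u) ∪ C(v). Then the extension c′ of c defined by c′(uv) = j is a proper edge k-coloring of G, and c′ is acyclic if and only if there is no color i ∈ C(u) ∩ C(v) for which H contains a path from u to v whose edges alternate between the colors i and j and whose first and last edges are both colored i. -/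
/-! A bichromatic cycle of the extended coloring either avoids `uv`, and is then a bichromatic
cycle of `c`, or passes through `uv`. In the latter case the rest of the cycle is a path from `u`
to `v` in `G − uv`; its first edge has a color `i ≠ j` because `j ∉ C(u)`, so its two colors are
`i` and `j`. Consecutive edges of a path meet, so properness makes the colors alternate, and the
last edge, which meets `v`, has color `i` again because `j ∉ C(v)`. Conversely such a path closes
up with `uv` into a cycle colored by `i` and `j`. -/

variable {V : Type*}

/-- `C(u)`: the set of colors appearing on the edges of `G` incident to `u`. -/
def colorsAt (G : SimpleGraph V) (c : Sym2 V → ℕ) (u : V) : Set ℕ :=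
  {n | ∃ e ∈ G.edgeSet, u ∈ e ∧ c e = n}

/-- `AltColors a b l` holds when the list `l` of colors alternates `a, b, a, b, …`,
starting with `a`. -/
def AltColors : ℕ → ℕ → List ℕ → Prop
  | _, _, [] => True
  | a, b, x :: l => x = a ∧ AltColors b a l

open SimpleGraph Walk

theorem AltColors.mem_or : ∀ {a b : ℕ} {l : List ℕ}, AltColors a b l → ∀ x ∈ l, x = a ∨ x = b
  | _, _, [], _, _, hx => absurd hx List.not_mem_nil
  | _, _, _ :: _, h, x, hx => by
    rcases List.mem_cons.1 hx with rfl | hx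
    · exact Or.inl h.1
    · exact (AltColors.mem_or h.2 x hx).symm

theorem altColors_of_isChain_ne : ∀ {a b : ℕ} {l : List ℕ}, (∀ x ∈ l, x = a ∨ x = b) →
    l.IsChain (· ≠ ·) → (∀ x ∈ l.head?, x = a) → AltColors a b l
  | _, _, [], _, _, _ => trivial
  | a, b, x :: l, hl, hch, hhead => by
    obtain rfl : x = a := hhead x rfl
    refine ⟨rfl, altColors_of_isChain_ne (fun y hy => (hl y (.tail _ hy)).symm) hch.tail ?_⟩
    cases l with
    | nil => simp
    | cons y l =>
      rintro _ ⟨⟩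
      exact (hl y (by simp)).resolve_left (List.isChain_cons_cons.1 hch).1.symm

theorem ProperEdgeColoring.isChain_ne_map_edges {G : SimpleGraph V} {k : ℕ} {c : Sym2 V → ℕ}
    (hc : ProperEdgeColoring G k c) {x y : V} {p : G.Walk x y} (hp : p.IsTrail) :
    (p.edges.map c).IsChain (· ≠ ·) := by
  rw [Walk.edges, List.map_map, List.isChain_map]
  refine p.isChain_dartAdj_darts.imp_of_mem_imp fun d d' hd hd' hadj => ?_
  have hne : d.edge ≠ d'.edge := fun h => by
    obtain rfl : d = d' := List.inj_on_of_nodup_map hp.edges_nodup hd hd' h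
    exact d.snd_ne_fst hadj
  exact hc.2 _ d.edge_mem _ d'.edge_mem hne
    ⟨d.snd, Sym2.mem_mk_right _ _, hadj ▸ Sym2.mem_mk_left _ _⟩

theorem ProperEdgeColoring.update [DecidableEq V] {G : SimpleGraph V} {u v : V} {k : ℕ}
    {c : Sym2 V → ℕ} (hc : ProperEdgeColoring (G.deleteEdges {s(u, v)}) k c) {j : ℕ}
    (hj : j ∈ Finset.Icc 1 k)
    (hj' : j ∉ colorsAt (G.deleteEdges {s(u, v)}) c u ∪ colorsAt (G.deleteEdges {s(u, v)}) c v) :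
    ProperEdgeColoring G k (Function.update c s(u, v) j) := by
  have hH : ∀ e ∈ G.edgeSet, e ≠ s(u, v) → e ∈ (G.deleteEdges {s(u, v)}).edgeSet :=
    fun e he hne => by simp [he, hne]
  have hcj : ∀ e ∈ G.edgeSet, e ≠ s(u, v) → ∀ x ∈ e, x ∈ s(u, v) → c e ≠ j := by
    rintro e he hne x hxe hx rfl
    rcases Sym2.mem_iff.1 hx with rfl | rfl
    exacts [hj' (.inl ⟨e, hH e he hne, hxe, rfl⟩), hj' (.inr ⟨e, hH e he hne, hxe, rfl⟩)]
  refine ⟨fun e he => ?_, ?_⟩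
  · rcases eq_or_ne e s(u, v) with rfl | hne
    · simpa using hj
    · simpa [Function.update_of_ne hne] using hc.1 e (hH e he hne)
  rintro e₁ h₁ e₂ h₂ hne ⟨x, hx₁, hx₂⟩
  rcases eq_or_ne e₁ s(u, v) with rfl | hne₁ <;> rcases eq_or_ne e₂ s(u, v) with rfl | hne₂
  · exact absurd rfl hne
  · simpa [Function.update_of_ne hne₂] using (hcj e₂ h₂ hne₂ x hx₂ hx₁).symm
  · simpa [Function.update_of_ne hne₁] using hcj e₁ h₁ hne₁ x hx₁ hx₂
  · simpa [Function.update_of_ne hne₁, Function.update_of_ne hne₂] using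
      hc.2 e₁ (hH e₁ h₁ hne₁) e₂ (hH e₂ h₂ hne₂) hne ⟨x, hx₁, hx₂⟩

theorem SimpleGraph.Walk.IsCycle.exists_isPath_of_mem_edges {G : SimpleGraph V} {x u v : V}
    {w : G.Walk x x} (hw : w.IsCycle) (he : s(u, v) ∈ w.edges) :
    ∃ p : G.Walk u v, p.IsPath ∧ s(u, v) ∉ p.edges ∧ p.edges ⊆ w.edges := by
  classical
  let c := w.rotate u (w.fst_mem_support_of_mem_edges he)
  have hcyc : c.IsCycle := hw.rotate _
  have hcw : c.edges ⊆ w.edges := fun e => (w.rotate_edges u _).perm.mem_iff.1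
  have hv : v ∈ c.support :=
    c.snd_mem_support_of_mem_edges ((w.rotate_edges u _).perm.mem_iff.2 he)
  have hsplit : ((c.takeUntil v hv).append (c.dropUntil v hv)).IsCycle := by
    rwa [c.take_spec hv]
  by_cases hfirst : s(u, v) ∈ (c.takeUntil v hv).edges
  · refine ⟨(c.dropUntil v hv).reverse,
      (hsplit.isPath_of_append_right (not_nil_of_ne (w.adj_of_mem_edges he).ne)).reverse, ?_, ?_⟩
    · simpa using hcyc.isTrail.disjoint_edges_takeUntil_dropUntil hv hfirst
    · simpa using List.Subset.trans (c.edges_dropUntil_subset_edges hv) hcw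
  · exact ⟨_, hcyc.isPath_takeUntil hv, hfirst,
      List.Subset.trans (c.edges_takeUntil_subset_edges hv) hcw⟩

theorem exists_altColors_of_isTrail {G : SimpleGraph V} {k : ℕ} {c : Sym2 V → ℕ}
    (hc : ProperEdgeColoring G k c) {u v : V} {p : G.Walk u v} (hp : p.IsTrail) (hnil : ¬p.Nil)
    {a b j : ℕ} (hcol : ∀ e ∈ p.edges, c e = a ∨ c e = b) (hja : j = a ∨ j = b)
    (hj : j ∉ colorsAt G c u ∪ colorsAt G c v) :
    ∃ i, i ∈ colorsAt G c u ∧ i ∈ colorsAt G c v ∧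
      AltColors i j (p.edges.map c) ∧ (p.edges.map c).getLast? = some i := by
  have hfirst := p.mk_start_snd_mem_edges hnil
  have hlast := p.mk_penultimate_end_mem_edges hnil
  have hiu : c s(u, p.snd) ∈ colorsAt G c u :=
    ⟨_, p.edges_subset_edgeSet hfirst, Sym2.mem_mk_left _ _, rfl⟩
  have hlv : c s(p.penultimate, v) ∈ colorsAt G c v :=
    ⟨_, p.edges_subset_edgeSet hlast, Sym2.mem_mk_right _ _, rfl⟩
  have hij : c s(u, p.snd) ≠ j := fun h => hj (.inl (h ▸ hiu))
  have hcol' : ∀ x ∈ p.edges.map c, x = c s(u, p.snd) ∨ x = j := by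
    simp only [List.mem_map]
    rintro _ ⟨e, he, rfl⟩
    have he_ab := hcol e he
    have hfirst_ab := hcol _ hfirst
    omega
  have hli : c s(p.penultimate, v) = c s(u, p.snd) :=
    (hcol' _ (List.mem_map_of_mem hlast)).resolve_right fun h => hj (.inr (h ▸ hlv))
  have hne := edges_eq_nil.not.mpr hnil
  refine ⟨_, hiu, hli ▸ hlv,
    altColors_of_isChain_ne hcol' (hc.isChain_ne_map_edges hp) ?_, ?_⟩
  · simp [List.head?_eq_some_head hne]
  · simp [List.getLast?_eq_some_getLast hne, hli]

theorem not_noBichromaticCycle_update [DecidableEq V] {G : SimpleGraph V} {u v : V}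
    (huv : G.Adj u v) (c : Sym2 V → ℕ) {i j : ℕ} {p : (G.deleteEdges {s(u, v)}).Walk u v}
    (hp : p.IsPath) (hcol : ∀ e ∈ p.edges, c e = i ∨ c e = j) :
    ¬ NoBichromaticCycle G (Function.update c s(u, v) j) := by
  have hpuv : ∀ e ∈ p.edges, e ≠ s(u, v) := fun e he h => by
    simpa [h] using p.edges_subset_edgeSet he
  let q := (p.mapLe (G.deleteEdges_le _)).reverse
  have hq : (cons huv q).IsCycle :=
    (cons_isCycle_iff q huv).2 ⟨(hp.mapLe _).reverse, fun h => hpuv _ (by simpa [q] using h) rfl⟩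
  refine fun hno => hno u _ hq ⟨j, i, fun e he => ?_⟩
  rw [edges_cons, List.mem_cons] at he
  rcases he with rfl | he
  · simp
  · have hpe : e ∈ p.edges := by
      simpa only [q, edges_reverse, List.mem_reverse, edges_mapLe_eq_edges] using he
    simpa [Function.update_of_ne (hpuv e hpe)] using (hcol e hpe).symm

theorem noBichromaticCycle_update [DecidableEq V] {G : SimpleGraph V} {u v : V} {k : ℕ}
    {c : Sym2 V → ℕ} (hc : AcyclicEdgeColoring (G.deleteEdges {s(u, v)}) k c) {j : ℕ}
    (hj : j ∉ colorsAt (G.deleteEdges {s(u, v)}) c u ∪ colorsAt (G.deleteEdges {s(u, v)}) c v)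
    (hno : ¬ ∃ i : ℕ, i ∈ colorsAt (G.deleteEdges {s(u, v)}) c u ∧
      i ∈ colorsAt (G.deleteEdges {s(u, v)}) c v ∧
      ∃ p : (G.deleteEdges {s(u, v)}).Walk u v, p.IsPath ∧
        AltColors i j (p.edges.map c) ∧ (p.edges.map c).getLast? = some i) :
    NoBichromaticCycle G (Function.update c s(u, v) j) := by
  rintro x w hw ⟨a, b, hab⟩
  have hcol : ∀ e ∈ w.edges, e ≠ s(u, v) → c e = a ∨ c e = b := fun e he hne => by
    simpa [Function.update_of_ne hne] using hab e he
  by_cases huvw : s(u, v) ∈ w.edges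
  · obtain ⟨p, hp, hpuv, hpw⟩ := hw.exists_isPath_of_mem_edges huvw
    have hp' := hp.toDeleteEdges G {s(u, v)} (by rintro e he rfl; exact hpuv he)
    obtain ⟨i, hiu, hiv, halt, hlast⟩ := exists_altColors_of_isTrail hc.1 hp'.isTrail
      (not_nil_of_ne (w.adj_of_mem_edges huvw).ne)
      (fun e he => hcol e (hpw (by simpa using he))
        (by rintro rfl; exact hpuv (by simpa using he)))
      (by simpa using hab _ huvw) hj
    exact hno ⟨i, hiu, hiv, _, hp', halt, hlast⟩
  · refine hc.2 x _ (hw.toDeleteEdges G {s(u, v)} (by rintro e he rfl; exact huvw he))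
      ⟨a, b, fun e he => ?_⟩
    simp only [edges_transfer] at he
    exact hcol e he (by rintro rfl; exact huvw he)

/-- Let `c` be an acyclic edge `k`-coloring of `H = G − uv` and `j ∈ {1, …, k}` a color
outside `C(u) ∪ C(v)`.  Then the extension `c'` of `c` with `c'(uv) = j` is a proper
edge `k`-coloring of `G`, and it is acyclic iff there is no color `i ∈ C(u) ∩ C(v)`
such that `H` contains a path from `u` to `v` whose edges alternate between the colors
`i` and `j`, starting and ending with an edge colored `i`. -/
theorem stmt_12 [DecidableEq V] (G : SimpleGraph V) (u v : V) (huv : G.Adj u v)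
    (k : ℕ) (c : Sym2 V → ℕ)
    (hc : AcyclicEdgeColoring (G.deleteEdges {s(u, v)}) k c)
    (j : ℕ) (hj : j ∈ Finset.Icc 1 k)
    (hj' : j ∉ colorsAt (G.deleteEdges {s(u, v)}) c u ∪
      colorsAt (G.deleteEdges {s(u, v)}) c v) :
    ProperEdgeColoring G k (fun e => if e = s(u, v) then j else c e) ∧
    (AcyclicEdgeColoring G k (fun e => if e = s(u, v) then j else c e) ↔
      ¬ ∃ i : ℕ, i ∈ colorsAt (G.deleteEdges {s(u, v)}) c u ∧
        i ∈ colorsAt (G.deleteEdges {s(u, v)}) c v ∧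
        ∃ p : (G.deleteEdges {s(u, v)}).Walk u v, p.IsPath ∧
          AltColors i j (p.edges.map c) ∧ (p.edges.map c).getLast? = some i) := by
  have hupdate : (fun e => if e = s(u, v) then j else c e) = Function.update c s(u, v) j :=
    funext fun e => (Function.update_apply c _ j e).symm
  rw [hupdate]
  have hproper := hc.1.update hj hj'
  refine ⟨hproper, fun hacyc ⟨i, _, _, p, hp, halt, _⟩ => ?_,
    fun hno => ⟨hproper, noBichromaticCycle_update hc hj' hno⟩⟩
  exact not_noBichromaticCycle_update huv c hp
    (fun e he => halt.mem_or _ (List.mem_map_of_mem he)) hacyc.2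
end
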